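/- arXiv:2508.04287 — 3 statements merged into one kernel-verified Lean document; each statement's English description precedes it below -/
import Mathlib

section
/- Let $a \in \mathbb{R}^{d_R \times d_R}$ be symmetric positive definite and $M \in \mathbb{R}^{d_S \times d_R}$, and set $a_S = M a M^\top$ and $\Sigma = \begin{pmatrix} \tfrac{1}{3} M a M^\top & \tfrac{1}{2} M a \\ \tfrac{1}{2} a M^\top & a \end{pmatrix}$. Then $\det \Sigma = 12^{-d_S}\, \det(a_S)\, \det(a)$. In particular, if $\det a_S > 0$ then $\Sigma$ is invertible. -/
open Matrix

theorem Matrix.det_fromBlocks_smul_mul {R m n : Type*} [CommRing R] [Fintype m] [DecidableEq m]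
    [Fintype n] [DecidableEq n] (a : Matrix n n R) (ha : IsUnit a.det) (M : Matrix m n R)
    (N : Matrix n m R) (c₁ c₂ c₃ : R) :
    (fromBlocks (c₁ • (M * a * N)) (c₂ • (M * a)) (c₃ • (a * N)) a).det
      = (c₁ - c₂ * c₃) ^ Fintype.card m * (M * a * N).det * a.det := by
  let := a.invertibleOfIsUnitDet ha
  have schur :
      c₁ • (M * a * N) - c₂ • (M * a) * ⅟a * c₃ • (a * N) = (c₁ - c₂ * c₃) • (M * a * N) := by
    simp only [Matrix.smul_mul, Matrix.mul_smul, smul_smul, sub_smul, Matrix.mul_assoc,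
      Matrix.invOf_mul_cancel_left, mul_comm c₃]
  rw [det_fromBlocks₂₂, schur, det_smul]
  ring

theorem det_locally_gaussian_blocks_general {dS dR : ℕ}
    (a : Matrix (Fin dR) (Fin dR) ℝ) (ha : a.PosDef)
    (M : Matrix (Fin dS) (Fin dR) ℝ) :
    (Matrix.fromBlocks ((1 / 3 : ℝ) • (M * a * Mᵀ)) ((1 / 2 : ℝ) • (M * a))
        ((1 / 2 : ℝ) • (a * Mᵀ)) a).det
      = (1 / 12 : ℝ) ^ dS * (M * a * Mᵀ).det * a.det ∧
    (0 < (M * a * Mᵀ).det →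
      IsUnit (Matrix.fromBlocks ((1 / 3 : ℝ) • (M * a * Mᵀ)) ((1 / 2 : ℝ) • (M * a))
        ((1 / 2 : ℝ) • (a * Mᵀ)) a).det) := by
  have hdet : (Matrix.fromBlocks ((1 / 3 : ℝ) • (M * a * Mᵀ)) ((1 / 2 : ℝ) • (M * a))
      ((1 / 2 : ℝ) • (a * Mᵀ)) a).det = (1 / 12 : ℝ) ^ dS * (M * a * Mᵀ).det * a.det := by
    rw [det_fromBlocks_smul_mul a ha.det_pos.ne'.isUnit, Fintype.card_fin]
    norm_num
  refine ⟨hdet, fun hpos => ?_⟩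
  have ha_det := ha.det_pos
  rw [hdet]
  exact (by positivity : 0 < (1 / 12 : ℝ) ^ dS * (M * a * Mᵀ).det * a.det).ne'.isUnit

/-- Determinant of the locally Gaussian block covariance:
`det Σ = 12⁻ᵈˢ det(a_S) det(a)` where `a_S = M a Mᵀ`; in particular if
`det a_S > 0` then `Σ` is invertible. -/
theorem det_locally_gaussian_blocks {dS dR : ℕ} (hdS : 1 ≤ dS) (hdR : 1 ≤ dR)
    (a : Matrix (Fin dR) (Fin dR) ℝ) (ha : a.PosDef)
    (M : Matrix (Fin dS) (Fin dR) ℝ) :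
    (Matrix.fromBlocks ((1 / 3 : ℝ) • (M * a * Mᵀ)) ((1 / 2 : ℝ) • (M * a))
        ((1 / 2 : ℝ) • (a * Mᵀ)) a).det
      = (1 / 12 : ℝ) ^ dS * (M * a * Mᵀ).det * a.det ∧
    (0 < (M * a * Mᵀ).det →
      IsUnit (Matrix.fromBlocks ((1 / 3 : ℝ) • (M * a * Mᵀ)) ((1 / 2 : ℝ) • (M * a))
        ((1 / 2 : ℝ) • (a * Mᵀ)) a).det) :=
  det_locally_gaussian_blocks_general a ha M
end

section
/- Let $Z$ be an index set and suppose $a_R : Z \to \mathbb{R}^{d_R \times d_R}$, $M : Z \to \mathbb{R}^{d_S \times d_R}$ are such that $a_R(z)$ is symmetric positive semidefinite for all $z$, $\inf_{z} \det a_R(z) \ge c_1 > 0$, and $\inf_{z} \det\bigl(M(z) a_R(z) M(z)^\top\bigr) \ge c_2 > 0$. Then defining $\Sigma(z) = \begin{pmatrix} \tfrac{1}{3} M(z) a_R(z) M(z)^\top & \tfrac{1}{2} M(z) a_R(z) \\ \tfrac{1}{2} a_R(z) M(z)^\top & a_R(z) \end{pmatrix}$, one has $\inf_{z} \det \Sigma(z)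 \ge 12^{-d_S} c_1 c_2 > 0$. -/
/-!
The lower right block `a_R` is invertible, so `det Σ = det a_R · det S` with the Schur
complement `S = (1/3) M a_R Mᵀ - (1/2 M a_R) a_R⁻¹ (1/2 a_R Mᵀ) = (1/12) M a_R Mᵀ`.
Hence `det Σ = 12⁻ᵈˢ det a_R det (M a_R Mᵀ) ≥ 12⁻ᵈˢ c₁ c₂`.
-/

open Matrix

namespace Matrix

variable {m n R : Type*} [Fintype m] [DecidableEq m] [Fintype n] [DecidableEq n] [CommRing R]

theorem det_fromBlocks_smul_mul_mul_transpose (A : Matrix n n R) [Invertible A]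
    (B : Matrix m n R) (a b c : R) :
    (fromBlocks (a • (B * A * Bᵀ)) (b • (B * A)) (c • (A * Bᵀ)) A).det =
      (a - b * c) ^ Fintype.card m * (A.det * (B * A * Bᵀ).det) := by
  have schur : a • (B * A * Bᵀ) - b • (B * A) * ⅟A * (c • (A * Bᵀ)) =
      (a - b * c) • (B * A * Bᵀ) := by
    rw [Matrix.smul_mul, Matrix.smul_mul, Matrix.mul_smul, smul_smul,
      Matrix.mul_invOf_cancel_right, ← Matrix.mul_assoc, sub_smul]
  rw [det_fromBlocks₂₂, schur, det_smul]
  ring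

end Matrix

theorem uniform_nondegenerate_locally_gaussian_general {dS dR : ℕ}
    {Z : Type*} (aR : Z → Matrix (Fin dR) (Fin dR) ℝ)
    (M : Z → Matrix (Fin dS) (Fin dR) ℝ) (c₁ c₂ : ℝ) (hc₁ : 0 < c₁) (hc₂ : 0 < c₂)
    (h₁ : ∀ z, c₁ ≤ (aR z).det)
    (h₂ : ∀ z, c₂ ≤ (M z * aR z * (M z)ᵀ).det) :
    (∀ z, (1 / 12 : ℝ) ^ dS * (c₁ * c₂) ≤
      (Matrix.fromBlocks ((1 / 3 : ℝ) • (M z * aR z * (M z)ᵀ))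
        ((1 / 2 : ℝ) • (M z * aR z))
        ((1 / 2 : ℝ) • (aR z * (M z)ᵀ)) (aR z)).det) ∧
    0 < (1 / 12 : ℝ) ^ dS * (c₁ * c₂) := by
  refine ⟨fun z => ?_, by positivity⟩
  have : Invertible (aR z) := invertibleOfIsUnitDet _ ((hc₁.trans_le (h₁ z)).ne').isUnit
  rw [det_fromBlocks_smul_mul_mul_transpose, Fintype.card_fin]
  norm_num
  gcongr
  · exact hc₁.le.trans (h₁ z)
  · exact h₁ z
  · exact h₂ z

/-- Uniform non-degeneracy of the locally Gaussian covariance under a uniform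
Hörmander-type condition: if `det a_R(z) ≥ c₁ > 0` and
`det (M(z) a_R(z) M(z)ᵀ) ≥ c₂ > 0` uniformly in `z`, then
`det Σ(z) ≥ 12⁻ᵈˢ c₁ c₂ > 0` uniformly in `z`. -/
theorem uniform_nondegenerate_locally_gaussian {dS dR : ℕ} (hdS : 1 ≤ dS) (hdR : 1 ≤ dR)
    {Z : Type*} (aR : Z → Matrix (Fin dR) (Fin dR) ℝ)
    (M : Z → Matrix (Fin dS) (Fin dR) ℝ) (c₁ c₂ : ℝ) (hc₁ : 0 < c₁) (hc₂ : 0 < c₂)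
    (hpsd : ∀ z, (aR z).PosSemidef)
    (h₁ : ∀ z, c₁ ≤ (aR z).det)
    (h₂ : ∀ z, c₂ ≤ (M z * aR z * (M z)ᵀ).det) :
    (∀ z, (1 / 12 : ℝ) ^ dS * (c₁ * c₂) ≤
      (Matrix.fromBlocks ((1 / 3 : ℝ) • (M z * aR z * (M z)ᵀ))
        ((1 / 2 : ℝ) • (M z * aR z))
        ((1 / 2 : ℝ) • (aR z * (M z)ᵀ)) (aR z)).det) ∧
    0 < (1 / 12 : ℝ) ^ dS * (c₁ * c₂) :=
  uniform_nondegenerate_locally_gaussian_general aR M c₁ c₂ hc₁ hc₂ h₁ h₂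
end

section
/- For each $n \in \mathbb{N}$ let $(\mathcal{F}^n_j)_{0 \le j \le n}$ be a filtration on a probability space and $(G^n_j)_{1 \le j \le n}$ be square-integrable random variables with $G^n_j$ being $\mathcal{F}^n_j$-measurable. If $\sum_{j=1}^n \mathbb{E}[G^n_j \mid \mathcal{F}^n_{j-1}] \to 0$ in probability and $\sum_{j=1}^n \mathbb{E}[(G^n_j)^2 \mid \mathcal{F}^n_{j-1}] \to 0$ in probability as $n \to \infty$, then $\sum_{j=1}^n G^n_j \to 0$ in probability as $n \to \infty$. -/
/-!
Write `∑ⱼ Gⁿⱼ` as the compensator `∑ⱼ E[Gⁿⱼ | 𝓕ⁿⱼ₋₁]`, which tends to zero by assumption, plus a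
sum of martingale differences `Xⁿⱼ`. Fix `c > 0` and switch `Xⁿⱼ` off as soon as
`∑_{i ≤ j} E[(Gⁿᵢ)² | 𝓕ⁿᵢ₋₁]` exceeds `c`; this event is known at time `j - 1`, so the switched-off
differences are still orthogonal and their sum has second moment at most `c`. It agrees with the
martingale part off `{∑ⱼ E[(Gⁿⱼ)² | 𝓕ⁿⱼ₋₁] > c}`, so by Chebyshev
`P(|∑ⱼ Xⁿⱼ| ≥ η) ≤ P(∑ⱼ E[(Gⁿⱼ)² | 𝓕ⁿⱼ₋₁] > c) + c / η²`; let `n → ∞`, then `c → 0`.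
-/

open MeasureTheory Filter Finset ProbabilityTheory
open scoped ENNReal Topology

theorem MeasureTheory.TendstoInMeasure.add {α ι E : Type*} [SeminormedAddCommGroup E]
    {_ : MeasurableSpace α} {μ : Measure α} {l : Filter ι} {f f' : ι → α → E} {g g' : α → E}
    (hf : TendstoInMeasure μ f l g) (hf' : TendstoInMeasure μ f' l g') :
    TendstoInMeasure μ (fun i x => f i x + f' i x) l (g + g') := by
  rw [tendstoInMeasure_iff_norm] at hf hf' ⊢
  intro ε hε
  have hsum := (hf (ε / 2) (half_pos hε)).add (hf' (ε / 2) (half_pos hε))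
  rw [add_zero] at hsum
  refine tendsto_of_tendsto_of_tendsto_of_le_of_le tendsto_const_nhds hsum (fun _ => zero_le)
    fun i => (measure_mono fun x hx => ?_).trans (measure_union_le _ _)
  have hsplit : f i x + f' i x - (g + g') x = (f i x - g x) + (f' i x - g' x) := by
    simp only [Pi.add_apply]; abel
  by_contra! hx'
  simp only [Set.mem_union, Set.mem_ofPred_eq, not_or, not_le] at hx hx'
  rw [hsplit] at hx
  linarith [norm_add_le (f i x - g x) (f' i x - g' x)]

theorem ENNReal.tendsto_nhds_zero_of_forall_le_add_ofReal {ι : Type*} {l : Filter ι}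
    {u : ι → ℝ≥0∞} {b : ℝ → ι → ℝ≥0∞} {K : ℝ} (hb : ∀ c > 0, Tendsto (b c) l (𝓝 0))
    (hu : ∀ c > 0, ∀ i, u i ≤ b c i + ENNReal.ofReal (c / K)) : Tendsto u l (𝓝 0) := by
  rw [ENNReal.tendsto_nhds_zero]
  intro δ hδ
  have hsmall : Tendsto (fun c : ℝ => ENNReal.ofReal (c / K)) (𝓝[>] 0) (𝓝 0) := by
    refine ((ENNReal.continuous_ofReal.comp (continuous_id.div_const K)).tendsto' 0 0 ?_).mono_left
      nhdsWithin_le_nhds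
    simp
  obtain ⟨c, hcδ, hc⟩ := ((ENNReal.tendsto_nhds_zero.1 hsmall (δ / 2)
    (ENNReal.half_pos hδ.ne')).and self_mem_nhdsWithin).exists
  filter_upwards [ENNReal.tendsto_nhds_zero.1 (hb c hc) (δ / 2) (ENNReal.half_pos hδ.ne')]
    with i hi
  calc u i ≤ b c i + ENNReal.ofReal (c / K) := hu c hc i
    _ ≤ δ / 2 + δ / 2 := add_le_add hi hcδ
    _ = δ := ENNReal.add_halves δ

theorem sum_Icc_ite_partialSum_le {v : ℕ → ℝ} {c : ℝ} (hc : 0 ≤ c) (n : ℕ) :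
    ∑ j ∈ Icc 1 n, (if ∑ i ∈ Icc 1 j, v i ≤ c then v j else 0) ≤ c := by
  suffices ∀ n, ∑ j ∈ Icc 1 n, (if ∑ i ∈ Icc 1 j, v i ≤ c then v j else 0)
      ≤ min (∑ i ∈ Icc 1 n, v i) c from (this n).trans (min_le_right _ _)
  intro n
  induction n with
  | zero => simp [hc]
  | succ n ih =>
    rw [sum_Icc_succ_top (by omega), sum_Icc_succ_top (by omega)]
    rw [le_min_iff] at ih ⊢
    split_ifs <;> constructor <;> linarith

namespace MeasureTheory

variable {Ω : Type*} {m0 : MeasurableSpace Ω} {μ : Measure Ω}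

theorem meas_abs_ge_le_of_integral_sq_le [IsFiniteMeasure μ] {f : Ω → ℝ} (hf : MemLp f 2 μ)
    {η c : ℝ} (hη : 0 < η) (hc : ∫ ω, f ω ^ 2 ∂μ ≤ c) :
    μ {ω | η ≤ |f ω|} ≤ ENNReal.ofReal (c / η ^ 2) := by
  have hset : {ω | η ≤ |f ω|} = {ω | η ^ 2 ≤ f ω ^ 2} := by
    ext ω
    simp only [Set.mem_ofPred_eq, ← sq_abs (f ω), sq_le_sq₀ hη.le (abs_nonneg _)]
  have hmarkov := mul_meas_ge_le_integral_of_nonneg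
    (ae_of_all _ fun ω => sq_nonneg (f ω)) hf.integrable_sq (η ^ 2)
  rw [hset, ← ofReal_measureReal]
  exact ENNReal.ofReal_le_ofReal ((le_div_iff₀' (by positivity)).2 (hmarkov.trans hc))

theorem condExp_sub_condExp_ae_eq_zero {m : MeasurableSpace Ω} (hm : m ≤ m0)
    [SigmaFinite (μ.trim hm)] {f : Ω → ℝ} (hf : Integrable f μ) :
    μ[f - μ[f | m] | m] =ᵐ[μ] 0 := by
  filter_upwards [condExp_sub hf integrable_condExp m] with ω hω
  rw [hω, condExp_of_stronglyMeasurable hm stronglyMeasurable_condExp integrable_condExp]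
  exact sub_self _

theorem integral_mul_eq_zero_of_condExp_eq_zero [IsFiniteMeasure μ] {m : MeasurableSpace Ω}
    (hm : m ≤ m0) {f g : Ω → ℝ} (hf : StronglyMeasurable[m] f) (hfg : Integrable (f * g) μ)
    (hg : Integrable g μ) (hg0 : μ[g | m] =ᵐ[μ] 0) :
    ∫ ω, f ω * g ω ∂μ = 0 := by
  refine (integral_condExp hm).symm.trans (integral_eq_zero_of_ae
    ((condExp_mul_of_stronglyMeasurable_left hf hfg hg).trans ?_))
  filter_upwards [hg0] with ω hω
  simp [hω]

theorem integral_sq_sum_eq_sum_integral_sq [IsFiniteMeasure μ] {𝓖 : ℕ → MeasurableSpace Ω}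
    (hle : ∀ j, 𝓖 j ≤ m0) (hmono : Monotone 𝓖) {s : Finset ℕ} {Y : ℕ → Ω → ℝ}
    (hmeas : ∀ j ∈ s, StronglyMeasurable[𝓖 j] (Y j)) (hL2 : ∀ j ∈ s, MemLp (Y j) 2 μ)
    (hY0 : ∀ j ∈ s, μ[Y j | 𝓖 (j - 1)] =ᵐ[μ] 0) :
    ∫ ω, (∑ j ∈ s, Y j ω) ^ 2 ∂μ = ∑ j ∈ s, ∫ ω, Y j ω ^ 2 ∂μ := by
  have hint : ∀ i ∈ s, ∀ j ∈ s, Integrable (fun ω => Y i ω * Y j ω) μ :=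
    fun i hi j hj => (hL2 i hi).integrable_mul (hL2 j hj)
  have hcross_lt : ∀ i ∈ s, ∀ j ∈ s, i < j → ∫ ω, Y i ω * Y j ω ∂μ = 0 :=
    fun i hi j hj hij => integral_mul_eq_zero_of_condExp_eq_zero (hle _)
      ((hmeas i hi).mono (hmono (Nat.le_sub_one_of_lt hij))) (hint i hi j hj)
      ((hL2 j hj).integrable one_le_two) (hY0 j hj)
  have hcross : ∀ i ∈ s, ∀ j ∈ s, j ≠ i → ∫ ω, Y i ω * Y j ω ∂μ = 0 := by
    intro i hi j hj hji
    rcases hji.lt_or_gt with h | h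
    · simpa only [mul_comm] using hcross_lt j hj i hi h
    · exact hcross_lt i hi j hj h
  simp_rw [sq, sum_mul_sum]
  rw [integral_finsetSum _ fun i hi => integrable_finsetSum _ fun j hj => hint i hi j hj]
  refine sum_congr rfl fun i hi => ?_
  rw [integral_finsetSum _ fun j hj => hint i hi j hj, sum_eq_single_of_mem i hi (hcross i hi)]

theorem integral_sq_indicator_sub_condExp_le [IsFiniteMeasure μ] {m : MeasurableSpace Ω}
    (hm : m ≤ m0) {s : Set Ω} (hs : MeasurableSet[m] s) {f : Ω → ℝ} (hf : MemLp f 2 μ) :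
    ∫ ω, s.indicator (f - μ[f | m]) ω ^ 2 ∂μ
      ≤ ∫ ω, s.indicator (μ[fun ω => f ω ^ 2 | m]) ω ∂μ := by
  have hint : Integrable ((f - μ[f | m]) ^ 2) μ := (hf.sub (hf.condExp one_le_two)).integrable_sq
  have hsq : ∀ ω, s.indicator (f - μ[f | m]) ω ^ 2 = s.indicator ((f - μ[f | m]) ^ 2) ω :=
    fun ω => by by_cases h : ω ∈ s <;> simp [h]
  simp_rw [hsq, integral_indicator (hm s hs)]
  calc ∫ ω in s, ((f - μ[f | m]) ^ 2) ω ∂μ = ∫ ω in s, Var[f; μ | m] ω ∂μ :=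
        (setIntegral_condVar (hm := hm) hint hs).symm
    _ ≤ _ := setIntegral_mono_ae integrable_condVar.integrableOn integrable_condExp.integrableOn
        (condVar_ae_le_condExp_sq hm hf)

section TruncatedIncrement

variable (μ) (𝓖 : ℕ → MeasurableSpace Ω) (G : ℕ → Ω → ℝ) (c : ℝ)

noncomputable def condSqSum (j : ℕ) (ω : Ω) : ℝ :=
  ∑ i ∈ Icc 1 j, μ[fun ω' => G i ω' ^ 2 | 𝓖 (i - 1)] ω

noncomputable def truncatedIncrement (j : ℕ) : Ω → ℝ :=
  {ω | condSqSum μ 𝓖 G j ω ≤ c}.indicator (G j - μ[G j | 𝓖 (j - 1)])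

variable {μ 𝓖 G c}

theorem ae_forall_condExp_sq_nonneg :
    ∀ᵐ ω ∂μ, ∀ i, 0 ≤ μ[fun ω' => G i ω' ^ 2 | 𝓖 (i - 1)] ω :=
  ae_all_iff.2 fun _ => condExp_nonneg (ae_of_all _ fun _ => sq_nonneg _)

theorem measurableSet_condSqSum_le (hmono : Monotone 𝓖) (j : ℕ) :
    MeasurableSet[𝓖 (j - 1)] {ω | condSqSum μ 𝓖 G j ω ≤ c} :=
  measurableSet_le (Finset.stronglyMeasurable_fun_sum _ fun _ hi =>
    stronglyMeasurable_condExp.mono (hmono (Nat.sub_le_sub_right (mem_Icc.1 hi).2 1))).measurable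
    measurable_const

theorem stronglyMeasurable_truncatedIncrement (hmono : Monotone 𝓖) {j : ℕ}
    (hG : StronglyMeasurable[𝓖 j] (G j)) :
    StronglyMeasurable[𝓖 j] (truncatedIncrement μ 𝓖 G c j) :=
  (hG.sub (stronglyMeasurable_condExp.mono (hmono (Nat.sub_le j 1)))).indicator
    (hmono (Nat.sub_le j 1) _ (measurableSet_condSqSum_le hmono j))

theorem memLp_truncatedIncrement [IsFiniteMeasure μ] (hle : ∀ j, 𝓖 j ≤ m0) (hmono : Monotone 𝓖)
    {j : ℕ} (hG : MemLp (G j) 2 μ) : MemLp (truncatedIncrement μ 𝓖 G c j) 2 μ :=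
  (hG.sub (hG.condExp one_le_two)).indicator (hle _ _ (measurableSet_condSqSum_le hmono j))

theorem condExp_truncatedIncrement [IsFiniteMeasure μ] (hle : ∀ j, 𝓖 j ≤ m0)
    (hmono : Monotone 𝓖) {j : ℕ} (hG : Integrable (G j) μ) :
    μ[truncatedIncrement μ 𝓖 G c j | 𝓖 (j - 1)] =ᵐ[μ] 0 := by
  filter_upwards
    [condExp_indicator (hG.sub integrable_condExp) (measurableSet_condSqSum_le hmono j),
    condExp_sub_condExp_ae_eq_zero (hle (j - 1)) hG] with ω hind hzero
  rw [truncatedIncrement, hind, Set.indicator_apply]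
  split_ifs <;> simp [hzero]

theorem integral_sq_sum_truncatedIncrement_le [IsProbabilityMeasure μ] (hle : ∀ j, 𝓖 j ≤ m0)
    (hmono : Monotone 𝓖) {n : ℕ} (hmeas : ∀ j ∈ Icc 1 n, StronglyMeasurable[𝓖 j] (G j))
    (hL2 : ∀ j ∈ Icc 1 n, MemLp (G j) 2 μ) (hc : 0 ≤ c) :
    ∫ ω, (∑ j ∈ Icc 1 n, truncatedIncrement μ 𝓖 G c j ω) ^ 2 ∂μ ≤ c := by
  set V : ℕ → Ω → ℝ := fun j => {ω | condSqSum μ 𝓖 G j ω ≤ c}.indicator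
    (μ[fun ω' => G j ω' ^ 2 | 𝓖 (j - 1)])
  have hV : ∀ j, Integrable (V j) μ := fun j =>
    integrable_condExp.indicator (hle _ _ (measurableSet_condSqSum_le hmono j))
  calc ∫ ω, (∑ j ∈ Icc 1 n, truncatedIncrement μ 𝓖 G c j ω) ^ 2 ∂μ
      = ∑ j ∈ Icc 1 n, ∫ ω, truncatedIncrement μ 𝓖 G c j ω ^ 2 ∂μ :=
        integral_sq_sum_eq_sum_integral_sq hle hmono
          (fun j hj => stronglyMeasurable_truncatedIncrement hmono (hmeas j hj))
          (fun j hj => memLp_truncatedIncrement hle hmono (hL2 j hj))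
          (fun j hj => condExp_truncatedIncrement hle hmono ((hL2 j hj).integrable one_le_two))
    _ ≤ ∑ j ∈ Icc 1 n, ∫ ω, V j ω ∂μ := sum_le_sum fun j hj =>
        integral_sq_indicator_sub_condExp_le (hle _) (measurableSet_condSqSum_le hmono j) (hL2 j hj)
    _ = ∫ ω, ∑ j ∈ Icc 1 n, V j ω ∂μ := (integral_finsetSum _ fun j _ => hV j).symm
    _ ≤ ∫ _, c ∂μ := integral_mono_ae (integrable_finsetSum _ fun j _ => hV j)
        (integrable_const c) (ae_of_all _ fun ω => by
          simpa only [V, Set.indicator_apply, Set.mem_ofPred_eq, condSqSum]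
            using sum_Icc_ite_partialSum_le hc n)
    _ = c := by simp

theorem sum_truncatedIncrement_eq {n : ℕ} {ω : Ω}
    (hV : ∀ i, 0 ≤ μ[fun ω' => G i ω' ^ 2 | 𝓖 (i - 1)] ω) (hn : condSqSum μ 𝓖 G n ω ≤ c) :
    ∑ j ∈ Icc 1 n, truncatedIncrement μ 𝓖 G c j ω
      = ∑ j ∈ Icc 1 n, (G j ω - μ[G j | 𝓖 (j - 1)] ω) := by
  refine sum_congr rfl fun j hj => Set.indicator_of_mem ?_ _
  exact (sum_le_sum_of_subset_of_nonneg (Icc_subset_Icc le_rfl (mem_Icc.1 hj).2)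
    fun i _ _ => hV i).trans hn

theorem meas_abs_sum_sub_condExp_ge_le [IsProbabilityMeasure μ] (hle : ∀ j, 𝓖 j ≤ m0)
    (hmono : Monotone 𝓖) {n : ℕ} (hmeas : ∀ j ∈ Icc 1 n, StronglyMeasurable[𝓖 j] (G j))
    (hL2 : ∀ j ∈ Icc 1 n, MemLp (G j) 2 μ) (hc : 0 ≤ c) {η : ℝ} (hη : 0 < η) :
    μ {ω | η ≤ |∑ j ∈ Icc 1 n, (G j ω - μ[G j | 𝓖 (j - 1)] ω)|}
      ≤ μ {ω | c < condSqSum μ 𝓖 G n ω} + ENNReal.ofReal (c / η ^ 2) := by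
  have hsub : ({ω | η ≤ |∑ j ∈ Icc 1 n, (G j ω - μ[G j | 𝓖 (j - 1)] ω)|} : Set Ω)
      ≤ᵐ[μ] ({ω | c < condSqSum μ 𝓖 G n ω}
        ∪ {ω | η ≤ |∑ j ∈ Icc 1 n, truncatedIncrement μ 𝓖 G c j ω|} : Set Ω) := by
    filter_upwards [ae_forall_condExp_sq_nonneg (μ := μ) (𝓖 := 𝓖) (G := G)] with ω hV hω
    by_cases hn : condSqSum μ 𝓖 G n ω ≤ c
    · right
      rwa [Set.mem_ofPred_eq, sum_truncatedIncrement_eq hV hn]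
    · exact Or.inl (not_le.1 hn)
  calc _ ≤ _ := measure_mono_ae hsub
    _ ≤ _ := measure_union_le _ _
    _ ≤ _ := add_le_add_right (meas_abs_ge_le_of_integral_sq_le
        (memLp_finsetSum _ fun j hj => memLp_truncatedIncrement hle hmono (hL2 j hj)) hη
        (integral_sq_sum_truncatedIncrement_le hle hmono hmeas hL2 hc)) _

end TruncatedIncrement

theorem tendstoInMeasure_sum_sub_condExp [IsProbabilityMeasure μ]
    {𝓕 : ℕ → ℕ → MeasurableSpace Ω} (hle : ∀ n j, 𝓕 n j ≤ m0) (hmono : ∀ n, Monotone (𝓕 n))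
    {G : ℕ → ℕ → Ω → ℝ} (hmeas : ∀ n, ∀ j ∈ Icc 1 n, StronglyMeasurable[𝓕 n j] (G n j))
    (hL2 : ∀ n, ∀ j ∈ Icc 1 n, MemLp (G n j) 2 μ)
    (hcondSq : TendstoInMeasure μ (fun n => condSqSum μ (𝓕 n) (G n) n) atTop 0) :
    TendstoInMeasure μ
      (fun n ω => ∑ j ∈ Icc 1 n, (G n j ω - μ[G n j | 𝓕 n (j - 1)] ω)) atTop 0 := by
  rw [tendstoInMeasure_iff_dist] at hcondSq ⊢
  intro η hη
  refine ENNReal.tendsto_nhds_zero_of_forall_le_add_ofReal (K := η ^ 2) (fun c hc => hcondSq c hc)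
    fun c hc n => ?_
  simp only [Pi.zero_apply, Real.dist_0_eq_abs]
  exact (meas_abs_sum_sub_condExp_ge_le (hle n) (hmono n) (hmeas n) (hL2 n) hc.le hη).trans
    (add_le_add_left (measure_mono fun ω (hω : c < _) => hω.le.trans (le_abs_self _)) _)

end MeasureTheory

/-- Triangular-array conditional convergence lemma (Genon-Catalot–Jacod, Lemma 9):
if the conditional means `∑_{j=1}^n E[Gⁿⱼ | 𝓕ⁿ_{j-1}]` and conditional second
moments `∑_{j=1}^n E[(Gⁿⱼ)² | 𝓕ⁿ_{j-1}]` both tend to `0` in probability, then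
`∑_{j=1}^n Gⁿⱼ → 0` in probability. -/
theorem triangular_array_conditional_convergence
    {Ω : Type*} {m0 : MeasurableSpace Ω} (μ : Measure Ω) [IsProbabilityMeasure μ]
    (𝓕 : ℕ → ℕ → MeasurableSpace Ω)
    (hle : ∀ n j, 𝓕 n j ≤ m0)
    (hmono : ∀ n, Monotone (𝓕 n))
    (G : ℕ → ℕ → Ω → ℝ)
    (hmeas : ∀ n j, 1 ≤ j → j ≤ n → Measurable[𝓕 n j] (G n j))
    (hL2 : ∀ n j, 1 ≤ j → j ≤ n → MemLp (G n j) 2 μ)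
    (h1 : TendstoInMeasure μ
      (fun n ω => ∑ j ∈ Finset.Icc 1 n, (μ[G n j | 𝓕 n (j - 1)]) ω) atTop 0)
    (h2 : TendstoInMeasure μ
      (fun n ω => ∑ j ∈ Finset.Icc 1 n,
        (μ[fun ω' => (G n j ω') ^ 2 | 𝓕 n (j - 1)]) ω) atTop 0) :
    TendstoInMeasure μ (fun n ω => ∑ j ∈ Finset.Icc 1 n, G n j ω) atTop 0 := by
  have hmart := tendstoInMeasure_sum_sub_condExp hle hmono
    (fun n j hj => (hmeas n j (mem_Icc.1 hj).1 (mem_Icc.1 hj).2).stronglyMeasurable)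
    (fun n j hj => hL2 n j (mem_Icc.1 hj).1 (mem_Icc.1 hj).2) h2
  convert h1.add hmart using 2 with n
  · ext ω
    rw [← sum_add_distrib]
    exact sum_congr rfl fun j _ => (add_sub_cancel _ _).symm
  · exact (add_zero 0).symm
end
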